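/- Let n ≥ 2, let B = {q ∈ ℝ^{n−1} : (q,q) < 1}, J a symmetric positive definite (n−1)×(n−1) real matrix, A = J⁻¹, V : B → ℝ continuously differentiable, and H(q,P) = ½(1 − (q,q))(AP,P) + V(q). Then H is a first integral of the reduced Suslov system q̇ = (1 − (q,q))·AP, Ṗ = (AP,P)·q − ∇V(q) + (AP,q)·P − (P,AP)·q: for every differentiable solution (q(t), P(t)) with q(t) ∈ B, the function t ↦ H(q(t),P(t)) is constant. -/

import Mathlib

/-!
Since `A` is symmetric, `d/dt (AP,P) = 2 (AP,Ṗ)`, so along a solution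
`dH/dt = (1 - (q,q)) · [ -(q,AP)(AP,P) + (AP,Ṗ) + (∇V,AP) ]`.
Substituting `Ṗ`, the potential terms cancel, `(AP,P)(AP,q)` cancels the first term, and the
two nonholonomic terms `(AP,q)(AP,P) - (P,AP)(AP,q)` cancel each other.
-/

open Matrix Set

/-- The continuous linear functional `v ↦ w ⬝ᵥ v` on `ℝᵐ`. -/
noncomputable def dotCLM {m : ℕ} (w : Fin m → ℝ) : (Fin m → ℝ) →L[ℝ] ℝ :=
  LinearMap.toContinuousLinearMap
    { toFun := fun v => w ⬝ᵥ v
      map_add' := fun a b => dotProduct_add w a b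
      map_smul' := fun c a => by simp [dotProduct_smul, smul_eq_mul] }

@[simp]
lemma dotCLM_apply {m : ℕ} (w v : Fin m → ℝ) : dotCLM w v = w ⬝ᵥ v := rfl

section Curves

variable {𝕜 ι : Type*} [NontriviallyNormedField 𝕜] [Fintype ι]
  {f g : 𝕜 → ι → 𝕜} {f' g' : ι → 𝕜} {t : 𝕜}

lemma HasDerivAt.dotProduct (hf : HasDerivAt f f' t) (hg : HasDerivAt g g' t) :
    HasDerivAt (fun t => f t ⬝ᵥ g t) (f' ⬝ᵥ g t + f t ⬝ᵥ g') t :=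
  (HasDerivAt.fun_sum fun i _ => (hasDerivAt_pi.1 hf i).mul (hasDerivAt_pi.1 hg i)).congr_deriv
    Finset.sum_add_distrib

lemma HasDerivAt.mulVec {κ : Type*} (M : Matrix κ ι 𝕜) (hf : HasDerivAt f f' t) :
    HasDerivAt (fun t => M *ᵥ f t) (M *ᵥ f') t :=
  hasDerivAt_pi.2 fun i =>
    ((hasDerivAt_const t (M i)).dotProduct hf).congr_deriv (by rw [zero_dotProduct, zero_add]; rfl)

end Curves

lemma Matrix.IsSymm.mulVec_dotProduct {ι : Type*} [Fintype ι] {M : Matrix ι ι ℝ}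
    (hM : M.IsSymm) (x y : ι → ℝ) : M *ᵥ x ⬝ᵥ y = x ⬝ᵥ M *ᵥ y := by
  rw [dotProduct_mulVec, ← mulVec_transpose, hM.eq]

section Suslov

variable {m : ℕ} {A : Matrix (Fin m) (Fin m) ℝ} {V : (Fin m → ℝ) → ℝ}

noncomputable def suslovHamiltonian (A : Matrix (Fin m) (Fin m) ℝ) (V : (Fin m → ℝ) → ℝ)
    (x p : Fin m → ℝ) : ℝ :=
  1 / 2 * (1 - x ⬝ᵥ x) * (A *ᵥ p ⬝ᵥ p) + V x

lemma HasDerivAt.suslovHamiltonian (hA : A.IsSymm) {q P : ℝ → Fin m → ℝ}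
    {q' P' : Fin m → ℝ} {V' : (Fin m → ℝ) →L[ℝ] ℝ} {t : ℝ}
    (hq : HasDerivAt q q' t) (hP : HasDerivAt P P' t) (hV : HasFDerivAt V V' (q t)) :
    HasDerivAt (fun t => suslovHamiltonian A V (q t) (P t))
      (-(q t ⬝ᵥ q') * (A *ᵥ P t ⬝ᵥ P t) + (1 - q t ⬝ᵥ q t) * (A *ᵥ P t ⬝ᵥ P') + V' q') t := by
  have hkin := ((hasDerivAt_const t (1 : ℝ)).sub (hq.dotProduct hq)).const_mul (1 / 2 : ℝ)
    |>.mul ((hP.mulVec A).dotProduct hP)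
  refine (hkin.add (hV.comp_hasDerivAt t hq)).congr_deriv ?_
  rw [hA.mulVec_dotProduct P', dotProduct_comm P', dotProduct_comm q']
  simp only [Pi.sub_apply]
  ring

lemma suslov_energy_rate_eq_zero (x p g : Fin m → ℝ) :
    -(x ⬝ᵥ (1 - x ⬝ᵥ x) • A *ᵥ p) * (A *ᵥ p ⬝ᵥ p)
      + (1 - x ⬝ᵥ x) * (A *ᵥ p ⬝ᵥ ((A *ᵥ p ⬝ᵥ p) • x - g + (A *ᵥ p ⬝ᵥ x) • p
        - (p ⬝ᵥ A *ᵥ p) • x))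
      + g ⬝ᵥ (1 - x ⬝ᵥ x) • A *ᵥ p = 0 := by
  simp only [dotProduct_smul, dotProduct_sub, dotProduct_add, smul_eq_mul,
    dotProduct_comm x (A *ᵥ p), dotProduct_comm g (A *ᵥ p), dotProduct_comm p (A *ᵥ p)]
  ring

end Suslov

theorem suslov_energy_integral (n : ℕ)
    (J A : Matrix (Fin (n - 1)) (Fin (n - 1)) ℝ) (hJ : J.IsSymm)
    (hA : A = J⁻¹)
    (V : (Fin (n - 1) → ℝ) → ℝ) (gradV : (Fin (n - 1) → ℝ) → (Fin (n - 1) → ℝ))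
    (hV : ∀ x, x ⬝ᵥ x < 1 → HasFDerivAt V (dotCLM (gradV x)) x)
    (a b : ℝ) (q P : ℝ → Fin (n - 1) → ℝ)
    (hball : ∀ t ∈ Ioo a b, q t ⬝ᵥ q t < 1)
    (hq : ∀ t ∈ Ioo a b, HasDerivAt q ((1 - q t ⬝ᵥ q t) • A.mulVec (P t)) t)
    (hP : ∀ t ∈ Ioo a b, HasDerivAt P
      ((A.mulVec (P t) ⬝ᵥ P t) • q t - gradV (q t)
        + (A.mulVec (P t) ⬝ᵥ q t) • P t - (P t ⬝ᵥ A.mulVec (P t)) • q t) t) :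
    ∀ t₁ ∈ Ioo a b, ∀ t₂ ∈ Ioo a b,
      (1 / 2) * (1 - q t₁ ⬝ᵥ q t₁) * (A.mulVec (P t₁) ⬝ᵥ P t₁) + V (q t₁) =
        (1 / 2) * (1 - q t₂ ⬝ᵥ q t₂) * (A.mulVec (P t₂) ⬝ᵥ P t₂) + V (q t₂) := by
  intro t₁ ht₁ t₂ ht₂
  have hA_symm : A.IsSymm := hA ▸ hJ.inv
  have hconserved (t : ℝ) (ht : t ∈ Ioo a b) :
      HasDerivAt (fun t => suslovHamiltonian A V (q t) (P t)) 0 t := by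
    have h := (hq t ht).suslovHamiltonian hA_symm (hP t ht) (hV _ (hball t ht))
    rwa [dotCLM_apply, suslov_energy_rate_eq_zero] at h
  exact isOpen_Ioo.is_const_of_deriv_eq_zero isPreconnected_Ioo
    (fun t ht => (hconserved t ht).differentiableAt.differentiableWithinAt)
    (fun t ht => (hconserved t ht).deriv) ht₁ ht₂
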